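/- arXiv:1712.04264 — 3 statements merged into one kernel-verified Lean document; each statement's English description precedes it below -/
import Mathlib

section
/- Let α, β be strings of length k over an alphabet of size s ≥ 2 with d(α,β) = k (they differ in every position). Then the number of strings γ of length k with d(α,γ) = i and d(β,γ) = j is (s-2)^{i+j-k} · C(k, i+j-k) · C(2k-i-j, k-j) when k ≤ i+j, i ≤ k, and j ≤ k (with the convention that this count is 0 if i+j < k). -/
/-!
Since `α` and `β` differ everywhere, each position of `γ` agrees with `β`, agrees with `α`, or
lies in the set `C` where it agrees with neither. With `B` the set of agreements with `β`,
`d(β, γ) = k - #B` and `d(α, γ) = #C + #B`, so `d(α, γ) = i`, `d(β, γ) = j` amount to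
`#C = i + j - k` and `#B = k - j`. There are `C(k, i + j - k) · C(2k - i - j, k - j)` choices of
the disjoint pair `(C, B)`, and each is realised by exactly `(s - 2)^#C` strings.
-/

open Finset

section ComplementaryStrings

variable {ι A : Type*} [Fintype ι] [DecidableEq A]

theorem forall_ne_of_hammingDist_eq_card {α β : ι → A}
    (h : hammingDist α β = Fintype.card ι) (x : ι) : α x ≠ β x :=
  filter_eq_self.mp (eq_univ_of_card _ h) x (mem_univ x)

def avoidSet (α β γ : ι → A) : Finset ι := {x | γ x ≠ α x ∧ γ x ≠ β x}

def agreeSet (β γ : ι → A) : Finset ι := {x | γ x = β x}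

theorem disjoint_avoidSet_agreeSet (α β γ : ι → A) :
    Disjoint (avoidSet α β γ) (agreeSet β γ) :=
  disjoint_filter.mpr fun _ _ h => h.2

theorem hammingDist_add_card_agreeSet (β γ : ι → A) :
    hammingDist β γ + #(agreeSet β γ) = Fintype.card ι := by
  simpa [hammingDist, agreeSet, eq_comm] using
    card_filter_add_card_filter_not (s := univ) fun x => β x ≠ γ x

theorem hammingDist_eq_card_avoidSet_add_card_agreeSet [DecidableEq ι] {α β : ι → A}
    (h : ∀ x, α x ≠ β x) (γ : ι → A) :
    hammingDist α γ = #(avoidSet α β γ) + #(agreeSet β γ) := by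
  rw [← card_union_of_disjoint (disjoint_avoidSet_agreeSet α β γ), hammingDist, avoidSet,
    agreeSet, ← filter_or]
  congr 1
  ext x
  have := h x
  simp only [mem_filter, mem_univ, true_and]
  grind

theorem hammingDist_add_hammingDist [DecidableEq ι] {α β : ι → A} (h : ∀ x, α x ≠ β x)
    (γ : ι → A) :
    hammingDist α γ + hammingDist β γ = Fintype.card ι + #(avoidSet α β γ) := by
  have := hammingDist_add_card_agreeSet β γ
  rw [hammingDist_eq_card_avoidSet_add_card_agreeSet h]
  omega

variable [DecidableEq ι] [Fintype A]

theorem filter_avoidSet_agreeSet_eq_piFinset {α β : ι → A} (h : ∀ x, α x ≠ β x)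
    {C B : Finset ι} (hCB : Disjoint C B) :
    ({γ | avoidSet α β γ = C ∧ agreeSet β γ = B} : Finset (ι → A)) =
      Fintype.piFinset fun x => if x ∈ C then {α x, β x}ᶜ else if x ∈ B then {β x} else {α x} := by
  ext γ
  simp only [mem_filter, mem_univ, true_and, Fintype.mem_piFinset, avoidSet, agreeSet,
    Finset.ext_iff, ← forall_and]
  refine forall_congr' fun x => ?_
  have := h x
  have : x ∈ C → x ∉ B := fun hx => disjoint_left.mp hCB hx
  split_ifs <;> simp only [mem_compl, mem_insert, mem_singleton] <;> grind

theorem card_filter_avoidSet_agreeSet {α β : ι → A} (h : ∀ x, α x ≠ β x)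
    {C B : Finset ι} (hCB : Disjoint C B) :
    #({γ | avoidSet α β γ = C ∧ agreeSet β γ = B} : Finset (ι → A)) =
      (Fintype.card A - 2) ^ #C := by
  rw [filter_avoidSet_agreeSet_eq_piFinset h hCB, Fintype.card_piFinset]
  calc _ = ∏ x, if x ∈ C then Fintype.card A - 2 else 1 :=
        prod_congr rfl fun x _ => by
          split_ifs
          · rw [card_compl, card_pair (h x)]
          all_goals exact card_singleton _
    _ = _ := by rw [prod_ite_mem, univ_inter, prod_const]

theorem card_sigma_powersetCard_compl (c b : ℕ) :
    #((powersetCard c (univ : Finset ι)).sigma fun C => powersetCard b Cᶜ) =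
      (Fintype.card ι).choose c * (Fintype.card ι - c).choose b := by
  rw [card_sigma, sum_congr rfl fun C hC => by
    rw [card_powersetCard, card_compl, (mem_powersetCard_univ.mp hC)], sum_const,
    card_powersetCard, card_univ, smul_eq_mul]

theorem card_filter_card_avoidSet_card_agreeSet {α β : ι → A} (h : ∀ x, α x ≠ β x)
    (c b : ℕ) :
    #({γ | #(avoidSet α β γ) = c ∧ #(agreeSet β γ) = b} : Finset (ι → A)) =
      (Fintype.card A - 2) ^ c * (Fintype.card ι).choose c * (Fintype.card ι - c).choose b := by
  set pattern : (ι → A) → Σ _ : Finset ι, Finset ι := fun γ => ⟨avoidSet α β γ, agreeSet β γ⟩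
  have hmaps : Set.MapsTo pattern
      (({γ | #(avoidSet α β γ) = c ∧ #(agreeSet β γ) = b} : Finset (ι → A)) : Set (ι → A))
      ↑((powersetCard c (univ : Finset ι)).sigma fun C => powersetCard b Cᶜ) := by
    intro γ hγ
    obtain ⟨hc, hb⟩ := (mem_filter.mp hγ).2
    simpa [pattern, hc, hb, subset_compl_iff_disjoint_left] using
      disjoint_avoidSet_agreeSet α β γ
  rw [card_eq_sum_card_fiberwise hmaps, mul_assoc, ← card_sigma_powersetCard_compl, mul_comm,
    ← smul_eq_mul, ← sum_const]
  refine sum_congr rfl fun ⟨C, B⟩ hCB => ?_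
  rw [mem_sigma, mem_powersetCard_univ, mem_powersetCard] at hCB
  obtain ⟨hC, hBC, hB⟩ := hCB
  rw [← hC, ← card_filter_avoidSet_agreeSet h (subset_compl_iff_disjoint_left.mp hBC)]
  congr 1
  ext γ
  simp only [pattern, filter_filter, mem_filter, Sigma.mk.injEq, heq_eq_eq]
  grind

end ComplementaryStrings

theorem count_intersection_complementary_strings_general
    {k : ℕ} {A : Type*} [Fintype A] [DecidableEq A]
    (α β : Fin k → A) (hab : hammingDist α β = k)
    (i j : ℕ) (hj : j ≤ k) :
    (k ≤ i + j →
      (Finset.univ.filter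
          (fun γ : Fin k → A => hammingDist α γ = i ∧ hammingDist β γ = j)).card =
        (Fintype.card A - 2) ^ (i + j - k) * Nat.choose k (i + j - k) *
          Nat.choose (2 * k - i - j) (k - j)) ∧
    (i + j < k →
      (Finset.univ.filter
          (fun γ : Fin k → A => hammingDist α γ = i ∧ hammingDist β γ = j)).card = 0) := by
  have hne : ∀ x, α x ≠ β x := forall_ne_of_hammingDist_eq_card (by rwa [Fintype.card_fin])
  have hsum γ := hammingDist_add_hammingDist hne γ
  have hagree γ := hammingDist_add_card_agreeSet β γ
  simp only [Fintype.card_fin] at hsum hagree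
  refine ⟨fun hk => ?_, fun hlt => ?_⟩
  · have hdist : ∀ γ : Fin k → A, hammingDist α γ = i ∧ hammingDist β γ = j ↔
        #(avoidSet α β γ) = i + j - k ∧ #(agreeSet β γ) = k - j := fun γ => by
      have := hsum γ
      have := hagree γ
      omega
    rw [filter_congr fun γ _ => hdist γ, card_filter_card_avoidSet_card_agreeSet hne,
      Fintype.card_fin, show k - (i + j - k) = 2 * k - i - j by omega]
  · rw [card_eq_zero, filter_eq_empty_iff]
    rintro γ - ⟨hi, hj⟩
    have := hsum γ
    omega

theorem count_intersection_complementary_strings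
    {k : ℕ} {A : Type*} [Fintype A] [DecidableEq A]
    (hs : 2 ≤ Fintype.card A) (α β : Fin k → A) (hab : hammingDist α β = k)
    (i j : ℕ) (hi : i ≤ k) (hj : j ≤ k) :
    (k ≤ i + j →
      (Finset.univ.filter
          (fun γ : Fin k → A => hammingDist α γ = i ∧ hammingDist β γ = j)).card =
        (Fintype.card A - 2) ^ (i + j - k) * Nat.choose k (i + j - k) *
          Nat.choose (2 * k - i - j) (k - j)) ∧
    (i + j < k →
      (Finset.univ.filter
          (fun γ : Fin k → A => hammingDist α γ = i ∧ hammingDist β γ = j)).card = 0) :=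
  count_intersection_complementary_strings_general α β hab i j hj
end

section
/- The size of the intersection of m-mismatch neighborhoods, |N_{k,m}(α) ∩ N_{k,m}(β)|, depends only on k, m, |Σ|, and the Hamming distance d(α,β); i.e., if α, β, α', β' ∈ Σ^k satisfy d(α,β) = d(α',β'), then |N_{k,m}(α) ∩ N_{k,m}(β)| = |N_{k,m}(α') ∩ N_{k,m}(β')|. -/
/-!
The Hamming distance is invariant under permuting the coordinates and, independently in each
coordinate, permuting the alphabet. Such a symmetry can send any pair of words to any other pair at
the same distance: reorder the coordinates so that the two sets of disagreement positions match,
then in each coordinate permute the alphabet so that `(α i, β i)` goes to `(α' i, β' i)`. A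
symmetry carrying `(α, β)` to `(α', β')` maps `N(α) ∩ N(β)` bijectively onto `N(α') ∩ N(β')`.
-/

open Equiv Finset

theorem Equiv.Perm.exists_apply_eq_and_apply_eq {A : Type*} [DecidableEq A] {a b a' b' : A}
    (h : a = b ↔ a' = b') : ∃ π : Perm A, π a = a' ∧ π b = b' := by
  -- first send `a` to `a'`, then the image of `b` to `b'`; the second swap fixes `a'`
  refine ⟨(swap a a').trans (swap (swap a a' b) b'), ?_, by simp⟩
  by_cases hab : a = b
  · simp [← hab, (h.mp hab).symm]
  · have hb : swap a a' b ≠ a' := by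
      simpa using (swap a a').injective.ne (Ne.symm hab)
    rw [trans_apply, swap_apply_left]
    exact swap_apply_of_ne_of_ne hb.symm fun h' => hab (h.mpr h')

/-- The symmetry `γ ↦ (i ↦ π i (γ (σ i)))` of the Hamming space `ι → A`. -/
def hammingSymmetry {ι A : Type*} (σ : Perm ι) (π : ι → Perm A) : Perm (ι → A) :=
  (σ.symm.arrowCongr (Equiv.refl A)).trans (piCongrRight π)

section Hamming

variable {ι A : Type*} [Fintype ι] [DecidableEq A]

theorem hammingDist_comp_perm (σ : Perm ι) (x y : ι → A) :
    hammingDist (x ∘ σ) (y ∘ σ) = hammingDist x y :=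
  card_equiv σ fun i => by simp

theorem hammingDist_hammingSymmetry (σ : Perm ι) (π : ι → Perm A) (x y : ι → A) :
    hammingDist (hammingSymmetry σ π x) (hammingSymmetry σ π y) = hammingDist x y :=
  (hammingDist_comp (fun i => π i) fun i => (π i).injective).trans (hammingDist_comp_perm σ x y)

theorem exists_perm_apply_eq_iff_of_hammingDist_eq {α β α' β' : ι → A}
    (h : hammingDist α β = hammingDist α' β') :
    ∃ σ : Perm ι, ∀ i, α (σ i) = β (σ i) ↔ α' i = β' i := by
  have hcard : Fintype.card {i // α' i ≠ β' i} = Fintype.card {i // α i ≠ β i} := by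
    rw [Fintype.card_subtype, Fintype.card_subtype]
    exact h.symm
  let e := Fintype.equivOfCardEq hcard
  refine ⟨e.extendSubtype, fun i => not_iff_not.mp ⟨fun hne hi => ?_, e.extendSubtype_mem i⟩⟩
  exact e.extendSubtype_not_mem i (not_not_intro hi) hne

theorem exists_hammingSymmetry_map_pair {α β α' β' : ι → A}
    (h : hammingDist α β = hammingDist α' β') :
    ∃ σ π, hammingSymmetry σ π α = α' ∧ hammingSymmetry σ π β = β' := by
  obtain ⟨σ, hσ⟩ := exists_perm_apply_eq_iff_of_hammingDist_eq h
  choose π hπα hπβ using fun i => Perm.exists_apply_eq_and_apply_eq (hσ i)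
  exact ⟨σ, π, funext hπα, funext hπβ⟩

theorem card_inter_hammingBalls_hammingSymmetry [DecidableEq ι] [Fintype A]
    (σ : Perm ι) (π : ι → Perm A) (m : ℕ) (α β : ι → A) :
    (univ.filter (fun γ => hammingDist (hammingSymmetry σ π α) γ ≤ m) ∩
        univ.filter (fun γ => hammingDist (hammingSymmetry σ π β) γ ≤ m)).card =
      (univ.filter (fun γ => hammingDist α γ ≤ m) ∩
        univ.filter (fun γ => hammingDist β γ ≤ m)).card :=
  (card_equiv (hammingSymmetry σ π) fun γ => by simp [hammingDist_hammingSymmetry]).symm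

end Hamming

theorem intersection_size_depends_only_on_distance
    {k m : ℕ} {A : Type*} [Fintype A] [DecidableEq A]
    (α β α' β' : Fin k → A) (h : hammingDist α β = hammingDist α' β') :
    ((Finset.univ.filter (fun γ : Fin k → A => hammingDist α γ ≤ m)) ∩
        (Finset.univ.filter (fun γ : Fin k → A => hammingDist β γ ≤ m))).card =
      ((Finset.univ.filter (fun γ : Fin k → A => hammingDist α' γ ≤ m)) ∩
        (Finset.univ.filter (fun γ : Fin k → A => hammingDist β' γ ≤ m))).card := by
  obtain ⟨σ, π, rfl, rfl⟩ := exists_hammingSymmetry_map_pair h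
  exact (card_inter_hammingBalls_hammingSymmetry σ π m α β).symm
end

section
/- For strings α, β ∈ Σ^k at Hamming distance d with |Σ| = s ≥ 2, the intersection size I_d = |N_{k,m}(α) ∩ N_{k,m}(β)| equals Σ_{q=0}^{m} Σ_{r=0}^{m} Σ_{t=0}^{⌊(q+r−d)/2⌋} C(2d−q−r+2t, d−(q−t)) · C(d, q+r−2t−d) · (s−2)^{q+r−2t−d} · C(k−d, t) · (s−1)^t. -/
/-- Binomial coefficient with integer arguments; 0 when out of range. -/
def zchoose (n r : ℤ) : ℕ := if 0 ≤ r ∧ r ≤ n then Nat.choose n.toNat r.toNat else 0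

/-- Power with integer exponent; 0 when the exponent is negative. -/
def zpow' (b : ℕ) (e : ℤ) : ℕ := if 0 ≤ e then b ^ e.toNat else 0

/-!
Let `D` be the set of coordinates where `α` and `β` differ. A word `γ` is classified by the
set `SA ⊆ D` where it agrees with `α`, the set `SB ⊆ D \ SA` where it agrees with `β`, and the
set `T ⊆ Dᶜ` where it differs from `α` (equivalently, from `β`). Then
`d(α, γ) = d - #SA + #T` and `d(β, γ) = d - #SB + #T`, and the words with a given classification
form a box: `s - 2` choices on `D \ (SA ∪ SB)`, `s - 1` on `T`, one elsewhere. For `#T = t` this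
forces `#SA = a := d + t - q` and `#SB = b := d + t - r`, so there are
`C(d, a) C(d - a, b) (s - 2)^(d - a - b) C(k - d, t) (s - 1)^t` such words, which is the stated
summand by `C(a + b, a) C(d, d - a - b) = C(d, a) C(d - a, b)`; when `q > d + t` or `r > d + t`
both are zero.
-/

open Finset

lemma zchoose_natCast (n r : ℕ) : zchoose n r = n.choose r := by
  unfold zchoose
  split_ifs with h
  · simp
  · rw [Nat.choose_eq_zero_of_lt (by omega)]

lemma zchoose_eq_zero {n r : ℤ} (h : r < 0 ∨ n < r) : zchoose n r = 0 :=
  if_neg (by omega)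

lemma zpow'_natCast (b e : ℕ) : zpow' b e = b ^ e := by
  simp [zpow']

lemma Nat.choose_add_mul_choose_sub_add {d a b : ℕ} (h : a + b ≤ d) :
    (a + b).choose a * d.choose (d - (a + b)) = d.choose a * (d - a).choose b := by
  rw [Nat.choose_symm h, mul_comm, Nat.choose_mul (Nat.le_add_right a b), Nat.add_sub_cancel_left]

lemma Finset.card_filter_le_and_le {α : Type*} (s : Finset α) (f g : α → ℕ) (m : ℕ) :
    #{x ∈ s | f x ≤ m ∧ g x ≤ m} =
      ∑ q ∈ range (m + 1), ∑ r ∈ range (m + 1), #{x ∈ s | f x = q ∧ g x = r} := by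
  calc #{x ∈ s | f x ≤ m ∧ g x ≤ m}
      = #{x ∈ s | (f x, g x) ∈ range (m + 1) ×ˢ range (m + 1)} := by
        simp only [mem_product, mem_range, Nat.lt_succ_iff]
    _ = ∑ p ∈ range (m + 1) ×ˢ range (m + 1), #{x ∈ s | (f x, g x) = p} :=
        (sum_card_fiberwise_eq_card_filter _ _ _).symm
    _ = _ := by simp only [sum_product, Prod.mk.injEq]

lemma Finset.card_sigma_powersetCard_sdiff {ι : Type*} [DecidableEq ι] (D : Finset ι) (a b : ℕ) :
    #((D.powersetCard a).sigma fun S => (D \ S).powersetCard b) =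
      (#D).choose a * (#D - a).choose b := by
  rw [card_sigma, sum_const_nat (m := (#D - a).choose b), card_powersetCard]
  intro S hS
  rw [card_powersetCard, card_sdiff_of_subset (mem_powersetCard.1 hS).1, (mem_powersetCard.1 hS).2]

section

variable {ι A : Type*} [Fintype ι] [DecidableEq A]

def diffSet (x y : ι → A) : Finset ι := {i | x i ≠ y i}

@[simp] lemma mem_diffSet {x y : ι → A} {i : ι} : i ∈ diffSet x y ↔ x i ≠ y i := by
  simp [diffSet]

lemma diffSet_comm (x y : ι → A) : diffSet x y = diffSet y x := by
  ext i
  simp [eq_comm]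

variable [DecidableEq ι] (α β : ι → A)

lemma hammingDist_left_add_card_sdiff (γ : ι → A) :
    hammingDist α γ + #(diffSet α β \ diffSet α γ) =
      #(diffSet α β) + #(diffSet α γ \ diffSet α β) := by
  have h₁ := card_sdiff_add_card_inter (diffSet α γ) (diffSet α β)
  have h₂ := card_sdiff_add_card_inter (diffSet α β) (diffSet α γ)
  rw [inter_comm] at h₂
  change #(diffSet α γ) + _ = _
  omega

lemma diffSet_sdiff_diffSet (γ : ι → A) :
    diffSet β γ \ diffSet α β = diffSet α γ \ diffSet α β := by
  ext i
  simp only [mem_sdiff, mem_diffSet, not_not]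
  constructor <;> rintro ⟨h, e⟩ <;> simp_all

lemma hammingDist_right_add_card_sdiff (γ : ι → A) :
    hammingDist β γ + #(diffSet α β \ diffSet β γ) =
      #(diffSet α β) + #(diffSet α γ \ diffSet α β) := by
  rw [diffSet_comm α β, diffSet_sdiff_diffSet β α]
  exact hammingDist_left_add_card_sdiff β α γ

lemma card_sdiff_add_card_sdiff_le (γ : ι → A) :
    #(diffSet α β \ diffSet α γ) + #(diffSet α β \ diffSet β γ) ≤ #(diffSet α β) := by
  rw [← card_union_of_disjoint]
  · exact card_le_card (union_subset sdiff_subset sdiff_subset)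
  · rw [disjoint_left]
    intro i h₁ h₂
    simp only [mem_sdiff, mem_diffSet, not_not] at h₁ h₂
    exact h₁.1 (h₁.2.trans h₂.2.symm)

variable [Fintype A]

lemma card_filter_diffSet_sdiff_eq {SA SB T : Finset ι} (hSA : SA ⊆ diffSet α β)
    (hSB : SB ⊆ diffSet α β \ SA) (hT : T ⊆ (diffSet α β)ᶜ) :
    #{γ | diffSet α β \ diffSet α γ = SA ∧ diffSet α β \ diffSet β γ = SB ∧
        diffSet α γ \ diffSet α β = T} =
      (Fintype.card A - 2) ^ (hammingDist α β - #SA - #SB) * (Fintype.card A - 1) ^ #T := by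
  have hmem : ∀ i, (i ∈ SA → α i ≠ β i) ∧ (i ∈ SB → α i ≠ β i ∧ i ∉ SA) ∧ (i ∈ T → α i = β i) :=
    fun i => ⟨by simpa using @hSA i, by simpa using @hSB i, by simpa using @hT i⟩
  set allowed : ι → Finset A := fun i =>
    if i ∈ SA then {α i} else if i ∈ SB then {β i} else if α i ≠ β i then {α i, β i}ᶜ
    else if i ∈ T then {α i}ᶜ else {α i}
  have hbox : ({γ | diffSet α β \ diffSet α γ = SA ∧ diffSet α β \ diffSet β γ = SB ∧
      diffSet α γ \ diffSet α β = T} : Finset (ι → A)) = Fintype.piFinset allowed := by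
    ext γ
    simp only [mem_filter, mem_univ, true_and, Fintype.mem_piFinset, Finset.ext_iff, mem_sdiff,
      mem_diffSet, ← forall_and]
    refine forall_congr' fun i => ?_
    obtain ⟨h₁, h₂, h₃⟩ := hmem i
    simp only [allowed]
    split_ifs <;> simp <;> grind
  have hcard : ∀ i, #(allowed i) =
      (if i ∈ diffSet α β \ (SA ∪ SB) then Fintype.card A - 2 else 1) *
        (if i ∈ T then Fintype.card A - 1 else 1) := by
    intro i
    obtain ⟨h₁, h₂, h₃⟩ := hmem i
    simp only [allowed]
    split_ifs <;> simp_all [card_compl, -compl_insert]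
  rw [hbox, Fintype.card_piFinset, prod_congr rfl fun i _ => hcard i, prod_mul_distrib,
    prod_ite_mem, prod_ite_mem, univ_inter, univ_inter, prod_const, prod_const,
    card_sdiff_of_subset (union_subset hSA (hSB.trans sdiff_subset)),
    card_union_of_disjoint (disjoint_of_subset_right hSB disjoint_sdiff), Nat.sub_sub]
  rfl

lemma card_filter_card_diffSet_sdiff_eq (a b t : ℕ) :
    #{γ | #(diffSet α β \ diffSet α γ) = a ∧ #(diffSet α β \ diffSet β γ) = b ∧
        #(diffSet α γ \ diffSet α β) = t} =
      (hammingDist α β).choose a * (hammingDist α β - a).choose b *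
        (Fintype.card A - 2) ^ (hammingDist α β - a - b) *
        (Fintype.card ι - hammingDist α β).choose t * (Fintype.card A - 1) ^ t := by
  set D := diffSet α β
  have hD : #D = hammingDist α β := rfl
  let pattern : (ι → A) → (Σ _ : Finset ι, Finset ι) × Finset ι := fun γ =>
    (⟨D \ diffSet α γ, D \ diffSet β γ⟩, diffSet α γ \ D)
  let P := ((D.powersetCard a).sigma fun SA => (D \ SA).powersetCard b) ×ˢ Dᶜ.powersetCard t
  have hP : ({γ | #(D \ diffSet α γ) = a ∧ #(D \ diffSet β γ) = b ∧
      #(diffSet α γ \ D) = t} : Finset (ι → A)) = ({γ | pattern γ ∈ P} : Finset (ι → A)) := by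
    refine filter_congr fun γ _ => ?_
    have hSB : D \ diffSet β γ ⊆ D \ (D \ diffSet α γ) := by
      intro i
      simp only [D, mem_sdiff, mem_diffSet, not_not, not_and]
      exact fun ⟨hi, hβ⟩ => ⟨hi, fun _ hα => hi (hα.trans hβ.symm)⟩
    have hT : diffSet α γ \ D ⊆ Dᶜ := fun i hi => mem_compl.2 (mem_sdiff.1 hi).2
    simp only [pattern, P, mem_product, mem_sigma, mem_powersetCard]
    exact ⟨fun ⟨ha, hb, ht⟩ => ⟨⟨⟨sdiff_subset, ha⟩, hSB, hb⟩, hT, ht⟩,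
      fun ⟨⟨⟨_, ha⟩, _, hb⟩, _, ht⟩ => ⟨ha, hb, ht⟩⟩
  have hfiber : ∀ p ∈ P, #{γ | pattern γ = p} =
      (Fintype.card A - 2) ^ (hammingDist α β - a - b) * (Fintype.card A - 1) ^ t := by
    rintro ⟨⟨SA, SB⟩, T⟩ hp
    simp only [P, mem_product, mem_sigma, mem_powersetCard] at hp
    obtain ⟨⟨⟨hSA, rfl⟩, hSB, rfl⟩, hT, rfl⟩ := hp
    rw [← card_filter_diffSet_sdiff_eq α β hSA hSB hT]
    congr 1
    refine filter_congr fun γ _ => ?_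
    simp [D, pattern, Sigma.ext_iff, and_assoc]
  rw [hP, ← sum_card_fiberwise_eq_card_filter, sum_congr rfl hfiber, sum_const, smul_eq_mul,
    card_product, card_sigma_powersetCard_sdiff, card_powersetCard, card_compl, hD]
  ring

lemma card_filter_hammingDist_eq_eq_sum (q r : ℕ) :
    #{γ | hammingDist α γ = q ∧ hammingDist β γ = r} =
      ∑ t ∈ range ((((q : ℤ) + r - hammingDist α β) / 2 + 1).toNat),
        #{γ | hammingDist α γ = q ∧ hammingDist β γ = r ∧ #(diffSet α γ \ diffSet α β) = t} := by
  rw [card_eq_sum_card_fiberwise (f := fun γ => #(diffSet α γ \ diffSet α β)) fun γ hγ => ?_]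
  · refine sum_congr rfl fun t _ => ?_
    rw [filter_filter]
    simp only [and_assoc]
  · obtain ⟨hq, hr⟩ := (mem_filter.1 (mem_coe.1 hγ)).2
    have hα := hammingDist_left_add_card_sdiff α β γ
    have hβ := hammingDist_right_add_card_sdiff α β γ
    have hab := card_sdiff_add_card_sdiff_le α β γ
    have hD : #(diffSet α β) = hammingDist α β := rfl
    simp only [coe_range, Set.mem_Iio]
    omega

lemma card_filter_hammingDist_eq_card_sdiff_eq {d : ℕ} (hd : hammingDist α β = d) {q r t : ℕ}
    (h : d + 2 * t ≤ q + r) :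
    #{γ | hammingDist α γ = q ∧ hammingDist β γ = r ∧ #(diffSet α γ \ diffSet α β) = t} =
      zchoose (2 * (d : ℤ) - q - r + 2 * t) ((d : ℤ) - ((q : ℤ) - t)) *
        zchoose (d : ℤ) ((q : ℤ) + r - 2 * t - d) *
        zpow' (Fintype.card A - 2) ((q : ℤ) + r - 2 * t - d) *
        zchoose ((Fintype.card ι : ℤ) - d) (t : ℤ) *
        zpow' (Fintype.card A - 1) (t : ℤ) := by
  have hD : #(diffSet α β) = d := hd
  by_cases hqr : q ≤ d + t ∧ r ≤ d + t
  · have hfilter : ({γ | hammingDist α γ = q ∧ hammingDist β γ = r ∧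
          #(diffSet α γ \ diffSet α β) = t} : Finset (ι → A)) =
        ({γ | #(diffSet α β \ diffSet α γ) = d + t - q ∧ #(diffSet α β \ diffSet β γ) = d + t - r ∧
          #(diffSet α γ \ diffSet α β) = t} : Finset (ι → A)) := by
      refine filter_congr fun γ _ => ?_
      have hα := hammingDist_left_add_card_sdiff α β γ
      have hβ := hammingDist_right_add_card_sdiff α β γ
      omega
    have hdk : d ≤ Fintype.card ι := hd ▸ card_le_univ _
    have ha : 2 * (d : ℤ) - q - r + 2 * t = ((d + t - q + (d + t - r) : ℕ) : ℤ) := by omega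
    have hb : (d : ℤ) - ((q : ℤ) - t) = ((d + t - q : ℕ) : ℤ) := by omega
    have hc : (q : ℤ) + r - 2 * t - d = ((d - (d + t - q) - (d + t - r) : ℕ) : ℤ) := by omega
    have hk : (Fintype.card ι : ℤ) - d = ((Fintype.card ι - d : ℕ) : ℤ) := by omega
    rw [hfilter, card_filter_card_diffSet_sdiff_eq, hd, ha, hb, hc, hk, zchoose_natCast,
      zchoose_natCast, zchoose_natCast, zpow'_natCast, zpow'_natCast, Nat.sub_sub d (d + t - q),
      Nat.choose_add_mul_choose_sub_add (by omega)]
  · rw [zchoose_eq_zero (by omega), zero_mul, zero_mul, zero_mul, zero_mul, card_eq_zero,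
      filter_eq_empty_iff]
    rintro γ - ⟨hq, hr, ht⟩
    have hα := hammingDist_left_add_card_sdiff α β γ
    have hβ := hammingDist_right_add_card_sdiff α β γ
    omega

end

theorem intersection_size_closed_form_general
    {k m : ℕ} {A : Type*} [Fintype A] [DecidableEq A]
    (α β : Fin k → A) (d : ℕ) (hd : hammingDist α β = d) :
    ((Finset.univ.filter (fun γ : Fin k → A => hammingDist α γ ≤ m)) ∩
        (Finset.univ.filter (fun γ : Fin k → A => hammingDist β γ ≤ m))).card =
      ∑ q ∈ Finset.range (m + 1), ∑ r ∈ Finset.range (m + 1),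
        ∑ t ∈ Finset.range ((((q : ℤ) + r - d) / 2 + 1).toNat),
          zchoose (2 * (d : ℤ) - q - r + 2 * t) ((d : ℤ) - ((q : ℤ) - t)) *
            zchoose (d : ℤ) ((q : ℤ) + r - 2 * t - d) *
            zpow' (Fintype.card A - 2) ((q : ℤ) + r - 2 * t - d) *
            zchoose ((k : ℤ) - d) (t : ℤ) *
            zpow' (Fintype.card A - 1) (t : ℤ) := by
  rw [← filter_and, card_filter_le_and_le]
  refine sum_congr rfl fun q _ => sum_congr rfl fun r _ => ?_
  rw [card_filter_hammingDist_eq_eq_sum, hd]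
  refine sum_congr rfl fun t ht => ?_
  rw [card_filter_hammingDist_eq_card_sdiff_eq α β hd (by simp only [mem_range] at ht; omega),
    Fintype.card_fin]

theorem intersection_size_closed_form
    {k m : ℕ} {A : Type*} [Fintype A] [DecidableEq A]
    (hs : 2 ≤ Fintype.card A) (α β : Fin k → A) (d : ℕ) (hd : hammingDist α β = d) :
    ((Finset.univ.filter (fun γ : Fin k → A => hammingDist α γ ≤ m)) ∩
        (Finset.univ.filter (fun γ : Fin k → A => hammingDist β γ ≤ m))).card =
      ∑ q ∈ Finset.range (m + 1), ∑ r ∈ Finset.range (m + 1),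
        ∑ t ∈ Finset.range ((((q : ℤ) + r - d) / 2 + 1).toNat),
          zchoose (2 * (d : ℤ) - q - r + 2 * t) ((d : ℤ) - ((q : ℤ) - t)) *
            zchoose (d : ℤ) ((q : ℤ) + r - 2 * t - d) *
            zpow' (Fintype.card A - 2) ((q : ℤ) + r - 2 * t - d) *
            zchoose ((k : ℤ) - d) (t : ℤ) *
            zpow' (Fintype.card A - 1) (t : ℤ) :=
  intersection_size_closed_form_general α β d hd
end
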